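/- arXiv:2504.07908 — 8 statements merged into one kernel-verified Lean document; each statement's English description precedes it below -/
import Mathlib

section
/- A linear operator φ on R^n that preserves majorization for probability distributions (a ⪯ b implies φ(a) ⪯ φ(b) whenever a, b are nonnegative with entries summing to 1) also preserves majorization for (0,1)-vectors, i.e., a ⪯ b implies φ(a) ⪯ φ(b) for all a, b ∈ {0,1}^n. -/
open Matrix

/-- `P` is a permutation matrix. -/
def IsPermMatrix {n : ℕ} (P : Matrix (Fin n) (Fin n) ℝ) : Prop :=
  ∃ σ : Equiv.Perm (Fin n), P = σ.permMatrix ℝ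

/-- Vector majorization: `a = D b` for some doubly stochastic `D`. -/
def VecMaj {n : ℕ} (a b : Fin n → ℝ) : Prop :=
  ∃ D ∈ doublyStochastic ℝ (Fin n), a = D.mulVec b

/-- Strong majorization of matrices: `A = D B` for some doubly stochastic `D`. -/
def StrongMaj {n m : ℕ} (A B : Matrix (Fin n) (Fin m) ℝ) : Prop :=
  ∃ D ∈ doublyStochastic ℝ (Fin n), A = D * B

/-- `a` is a permutation of `b`. -/
def PermOf {n : ℕ} (a b : Fin n → ℝ) : Prop :=
  ∃ σ : Equiv.Perm (Fin n), ∀ i, a i = b (σ i)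

/-!
Majorization is invariant under scaling both vectors and forces equal sums. So two nonnegative
vectors `a ⪯ b` with common sum `s > 0` become probability vectors after dividing by `s`, and
linearity of `φ` carries the conclusion back; if `s = 0` then `a = b = 0`.
-/

namespace VecMaj

variable {n : ℕ} {a b : Fin n → ℝ}

lemma refl (a : Fin n → ℝ) : VecMaj a a :=
  ⟨1, one_mem _, (one_mulVec a).symm⟩

lemma sum_eq (h : VecMaj a b) : ∑ i, a i = ∑ i, b i := by
  obtain ⟨D, hD, rfl⟩ := h
  exact sum_mulVec_of_mem_doublyStochastic hD

lemma smul (c : ℝ) (h : VecMaj a b) : VecMaj (c • a) (c • b) := by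
  obtain ⟨D, hD, rfl⟩ := h
  exact ⟨D, hD, (mulVec_smul D c b).symm⟩

lemma of_smul {c : ℝ} (hc : c ≠ 0) (h : VecMaj (c • a) (c • b)) : VecMaj a b := by
  simpa only [smul_smul, inv_mul_cancel₀ hc, one_smul] using h.smul c⁻¹

end VecMaj

theorem vecMaj_map_of_nonneg {n : ℕ} (φ : (Fin n → ℝ) →ₗ[ℝ] (Fin n → ℝ))
    (h : ∀ a b : Fin n → ℝ, (∀ i, 0 ≤ a i) → ∑ i, a i = 1 →
      (∀ i, 0 ≤ b i) → ∑ i, b i = 1 → VecMaj a b → VecMaj (φ a) (φ b))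
    {a b : Fin n → ℝ} (ha : ∀ i, 0 ≤ a i) (hb : ∀ i, 0 ≤ b i) (hab : VecMaj a b) :
    VecMaj (φ a) (φ b) := by
  set s := ∑ i, b i
  rcases (Finset.sum_nonneg fun i _ => hb i : 0 ≤ s).eq_or_lt with hs0 | hs0
  · have hb0 : b = 0 := funext ((Finset.sum_eq_zero_iff_of_nonneg fun i _ => hb i).1 hs0.symm ·
      (Finset.mem_univ _))
    obtain ⟨D, -, rfl⟩ := hab
    rw [hb0, mulVec_zero]
    exact VecMaj.refl _
  · have hscale : ∀ x : Fin n → ℝ, ∑ i, x i = s → ∑ i, (s⁻¹ • x) i = 1 := fun x hx => by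
      simp only [Pi.smul_apply, smul_eq_mul, ← Finset.mul_sum, hx]
      exact inv_mul_cancel₀ hs0.ne'
    have hnonneg : ∀ x : Fin n → ℝ, (∀ i, 0 ≤ x i) → ∀ i, 0 ≤ (s⁻¹ • x) i :=
      fun x hx i => mul_nonneg (inv_nonneg.2 hs0.le) (hx i)
    refine VecMaj.of_smul (inv_ne_zero hs0.ne') ?_
    rw [← map_smul, ← map_smul]
    exact h _ _ (hnonneg a ha) (hscale a hab.sum_eq) (hnonneg b hb) (hscale b rfl) (hab.smul _)

theorem stmt7 {n : ℕ} (φ : (Fin n → ℝ) →ₗ[ℝ] (Fin n → ℝ))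
    (h : ∀ a b : Fin n → ℝ, (∀ i, 0 ≤ a i) → ∑ i, a i = 1 →
      (∀ i, 0 ≤ b i) → ∑ i, b i = 1 → VecMaj a b → VecMaj (φ a) (φ b)) :
    ∀ a b : Fin n → ℝ, (∀ i, a i = 0 ∨ a i = 1) → (∀ i, b i = 0 ∨ b i = 1) →
      VecMaj a b → VecMaj (φ a) (φ b) := by
  have nonneg_of_binary : ∀ x : Fin n → ℝ, (∀ i, x i = 0 ∨ x i = 1) → ∀ i, 0 ≤ x i :=
    fun x hx i => by rcases hx i with hxi | hxi <;> simp [hxi]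
  intro a b ha hb hab
  exact vecMaj_map_of_nonneg φ h (nonneg_of_binary a ha) (nonneg_of_binary b hb) hab
end

section
/- Let X be an n×n real matrix such that Xa ∼ XPa for every zero-sum vector a and every permutation matrix P (condition (0)). Then e^t X^{(i)} = e^t X^{(j)} for all columns i, j of X. -/
open Matrix

/-- Condition (0): `X a` is a permutation of `X P a` for every zero-sum `a`
and every permutation matrix `P`. -/
def Cond0 {n : ℕ} (X : Matrix (Fin n) (Fin n) ℝ) : Prop :=
  ∀ a : Fin n → ℝ, ∑ i, a i = 0 →
    ∀ P : Matrix (Fin n) (Fin n) ℝ, IsPermMatrix P →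
      PermOf (X.mulVec a) (X.mulVec (P.mulVec a))

theorem stmt10 {n : ℕ} (X : Matrix (Fin n) (Fin n) ℝ) (hX : Cond0 X) :
    ∀ i j : Fin n, ∑ k, X k i = ∑ k, X k j := by
  intro i j
  set a : Fin n → ℝ := fun k => (if k = i then (1:ℝ) else 0) - (if k = j then 1 else 0) with ha
  have hsum : ∑ k, a k = 0 := by
    simp [ha, Finset.sum_sub_distrib]
  set σ : Equiv.Perm (Fin n) := Equiv.swap i j with hσ
  have hP : IsPermMatrix (σ.permMatrix ℝ) := ⟨σ, rfl⟩
  have hPa : (σ.permMatrix ℝ).mulVec a = fun k => - a k := by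
    funext k
    have : (σ.permMatrix ℝ).mulVec a k = a (σ k) := by
      simp [Matrix.mulVec, dotProduct, Equiv.Perm.permMatrix,
        PEquiv.toMatrix_apply, Equiv.toPEquiv_apply, eq_comm,
        Finset.sum_ite_eq]
    rw [this]
    rcases eq_or_ne k i with rfl | hki
    · simp [hσ, ha, Equiv.swap_apply_left]
      by_cases h : k = j <;> simp [h, Ne.symm]
    · rcases eq_or_ne k j with rfl | hkj
      · simp [hσ, ha, Equiv.swap_apply_right, hki, hki.symm]
      · simp [hσ, ha, Equiv.swap_apply_of_ne_of_ne hki hkj, hki, hkj]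
  obtain ⟨τ, hτ⟩ := hX a hsum _ hP
  rw [hPa] at hτ
  have hneg : X.mulVec (fun k => - a k) = fun k => - (X.mulVec a) k := by
    funext k
    simp [Matrix.mulVec, dotProduct, Finset.sum_neg_distrib, mul_neg]
  rw [hneg] at hτ
  have hS : ∑ k, X.mulVec a k = ∑ k, - (X.mulVec a) (τ k) := Finset.sum_congr rfl (fun k _ => hτ k)
  have hS2 : ∑ k, - (X.mulVec a) (τ k) = - ∑ k, X.mulVec a k := by
    rw [Finset.sum_neg_distrib]
    exact congrArg Neg.neg (Equiv.sum_comp τ _)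
  have hzero : ∑ k, X.mulVec a k = 0 := by linarith [hS.trans hS2]
  have hexp : ∑ k, X.mulVec a k = (∑ k, X k i) - ∑ k, X k j := by
    simp [Matrix.mulVec, dotProduct, ha, mul_sub, Finset.sum_sub_distrib,
      mul_ite, Finset.sum_ite_eq']
  linarith [hexp ▸ hzero]
end

section
/- Let X be an n×n matrix satisfying condition (0) (i.e., Xa ∼ XPa for all zero-sum a and permutations P). If two distinct columns of X are equal, then all columns of X are equal, i.e., X = X^{(1)} e^t. -/
open Matrix

lemma permMatrix_mulVec' {n : ℕ} (σ : Equiv.Perm (Fin n)) (a : Fin n → ℝ) :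
    (σ.permMatrix ℝ).mulVec a = fun k => a (σ k) := by
  funext k
  simp [Matrix.mulVec, dotProduct, Equiv.Perm.permMatrix, PEquiv.toMatrix,
    Equiv.toPEquiv]

theorem stmt11 {n : ℕ} (X : Matrix (Fin n) (Fin n) ℝ) (hX : Cond0 X)
    (i j : Fin n) (hij : i ≠ j) (hcol : ∀ k, X k i = X k j) :
    ∀ k l l', X k l = X k l' := by
  have key : ∀ l k, X k l = X k i := by
    intro l k
    by_cases hli : l = i
    · rw [hli]
    by_cases hlj : l = j
    · rw [hlj]; exact (hcol k).symm
    -- a = e_i - e_j, zero-sum, with X a = 0 since columns i and j agree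
    set a : Fin n → ℝ := Pi.single i 1 - Pi.single j 1 with ha
    have hsum : ∑ m, a m = 0 := by
      simp [ha, Finset.sum_sub_distrib]
    set σ : Equiv.Perm (Fin n) := Equiv.swap j l with hσ
    obtain ⟨τ, hτ⟩ := hX a hsum (σ.permMatrix ℝ) ⟨σ, rfl⟩
    have hXa : X.mulVec a = 0 := by
      funext k'
      simp [ha, Matrix.mulVec_sub, hcol k']
    have hPa : (σ.permMatrix ℝ).mulVec a = Pi.single i 1 - Pi.single l 1 := by
      rw [permMatrix_mulVec']
      funext m
      have hil : i ≠ l := fun h => hli h.symm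
      have hσi : σ i = i := Equiv.swap_apply_of_ne_of_ne hij hil
      have hσl : σ l = j := Equiv.swap_apply_right j l
      by_cases hmi : m = i
      · subst hmi
        simp [ha, Pi.single_apply, hσi, hij, Ne.symm hil]
      by_cases hml : m = l
      · subst hml
        simp [ha, Pi.single_apply, hσl, hli, Ne.symm hij, hmi]
      · have hσm : σ m ≠ i := by
          intro h
          exact hmi (σ.injective (h.trans hσi.symm))
        have hσm' : σ m ≠ j := by
          intro h
          exact hml (σ.injective (h.trans hσl.symm))
        simp [ha, Pi.single_apply, hσm, hσm', hmi, hml]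
    -- X (P a) is a permutation of 0, hence 0
    have hzero : ∀ m, X.mulVec ((σ.permMatrix ℝ).mulVec a) m = 0 := by
      intro m
      have := hτ (τ.symm m)
      rw [hXa] at this
      simpa using this.symm
    have := hzero k
    rw [hPa] at this
    have : X k i - X k l = 0 := by
      simpa [Matrix.mulVec_sub] using this
    linarith
  intro k l l'
  rw [key l k, key l' k]
end

section
/- Let X be an n×n matrix satisfying condition (0). Then for any distinct indices i, j ∈ {1,...,n}, there exists a nonzero zero-sum vector v and α ≥ 0 such that Xv = α(e_i − e_j). -/
open Matrix

/-- the sum-of-coordinates functional -/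
def sumL (n : ℕ) : (Fin n → ℝ) →ₗ[ℝ] ℝ where
  toFun a := ∑ m, a m
  map_add' := by intros; simp [Finset.sum_add_distrib]
  map_smul' := by intros; simp [Finset.mul_sum]

theorem stmt12 {n : ℕ} (X : Matrix (Fin n) (Fin n) ℝ) (hX : Cond0 X)
    (i j : Fin n) (hij : i ≠ j) :
    ∃ (v : Fin n → ℝ) (α : ℝ), v ≠ 0 ∧ ∑ k, v k = 0 ∧ 0 ≤ α ∧
      X.mulVec v = α • (Pi.single i 1 - Pi.single j 1) := by
  -- Step 1: column sums are all equal
  have key : ∀ k l : Fin n, k ≠ l → (∑ m, X m k) = ∑ m, X m l := by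
    intro k l hkl
    set a : Fin n → ℝ := Pi.single k 1 - Pi.single l 1 with ha
    have hsum : ∑ m, a m = 0 := by
      simp [ha, Finset.sum_sub_distrib]
    have h := hX a hsum _ ⟨Equiv.swap k l, rfl⟩
    have hpa : ((Equiv.swap k l).permMatrix ℝ).mulVec a = -a := by
      funext m
      simp only [Equiv.Perm.permMatrix, PEquiv.toMatrix, Matrix.mulVec, dotProduct,
        Equiv.toPEquiv, ha]
      rcases eq_or_ne m k with rfl | hmk
      · simp [Equiv.swap_apply_left, Pi.single_apply, hkl, hkl.symm]
      rcases eq_or_ne m l with rfl | hml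
      · simp [Equiv.swap_apply_right, Pi.single_apply, hkl, hkl.symm]
      · simp [Equiv.swap_apply_of_ne_of_ne hmk hml, Pi.single_apply, hmk, hml]
    rw [hpa] at h
    obtain ⟨τ, hτ⟩ := h
    have hS : (∑ m, X.mulVec a m) = 0 := by
      have h1 : ∑ m, X.mulVec a m = ∑ m, X.mulVec (-a) (τ m) := Finset.sum_congr rfl fun m _ => hτ m
      have h2 : ∑ m, X.mulVec (-a) (τ m) = ∑ m, X.mulVec (-a) m := Equiv.sum_comp τ _
      have h3 : ∑ m, X.mulVec (-a) m = -∑ m, X.mulVec a m := by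
        simp [Matrix.mulVec_neg, Finset.sum_neg_distrib]
      linarith [h1.trans (h2.trans h3)]
    have hexp : (∑ m, X.mulVec a m) = (∑ m, X m k) - ∑ m, X m l := by
      simp [Matrix.mulVec, dotProduct, ha, Pi.single_apply, mul_sub, Finset.sum_sub_distrib]
    linarith [hexp ▸ hS]
  -- Step 2: image of zero-sum vectors is zero-sum
  have himg : ∀ a : Fin n → ℝ, (∑ m, a m) = 0 → (∑ m, X.mulVec a m) = 0 := by
    intro a hsum
    have : (∑ m, X.mulVec a m) = ∑ p, (∑ m, X m p) * a p := by
      simp only [Matrix.mulVec, dotProduct]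
      rw [Finset.sum_comm]
      simp [Finset.sum_mul]
    rw [this]
    have hcol : ∀ p, (∑ m, X m p) = ∑ m, X m i := by
      intro p
      rcases eq_or_ne p i with rfl | hpi
      · rfl
      · exact key p i hpi
    calc ∑ p, (∑ m, X m p) * a p = ∑ p, (∑ m, X m i) * a p := by
          exact Finset.sum_congr rfl fun p _ => by rw [hcol p]
      _ = (∑ m, X m i) * ∑ p, a p := by rw [Finset.mul_sum]
      _ = 0 := by rw [hsum, mul_zero]
  -- Step 3: linear endomorphism of the zero-sum hyperplane
  set H : Submodule ℝ (Fin n → ℝ) := LinearMap.ker (sumL n) with hH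
  have memH : ∀ a : Fin n → ℝ, a ∈ H ↔ (∑ m, a m) = 0 := fun a => Iff.rfl
  have hL : ∀ x ∈ H, X.mulVecLin x ∈ H := by
    intro x hx
    exact himg x hx
  set L : H →ₗ[ℝ] H := (X.mulVecLin.comp H.subtype).codRestrict H (fun x => hL x.1 x.2) with hLdef
  have e_mem : (Pi.single i 1 - Pi.single j 1 : Fin n → ℝ) ∈ H := by
    rw [memH]
    simp [Finset.sum_sub_distrib]
  by_cases hinj : Function.Injective L
  · obtain ⟨v, hv⟩ := (LinearMap.injective_iff_surjective.mp hinj) ⟨_, e_mem⟩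
    refine ⟨v.1, 1, ?_, v.2, zero_le_one, ?_⟩
    · intro h0
      have : L v = 0 := by
        have : (v : Fin n → ℝ) = 0 := h0
        have hv0 : v = 0 := Subtype.ext this
        rw [hv0, map_zero]
      rw [hv] at this
      have := congrArg (fun w : H => (w : Fin n → ℝ) i) this
      simp [Pi.single_apply, hij.symm] at this
    · have h1 : X.mulVec v.1 = (Pi.single i 1 - Pi.single j 1 : Fin n → ℝ) :=
        congrArg Subtype.val hv
      rw [h1, one_smul]
  · rw [← LinearMap.ker_eq_bot] at hinj
    obtain ⟨v, hvker, hv0⟩ := Submodule.exists_mem_ne_zero_of_ne_bot hinj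
    refine ⟨v.1, 0, ?_, v.2, le_refl 0, ?_⟩
    · intro h0
      exact hv0 (Subtype.ext h0)
    · have h1 : X.mulVec v.1 = 0 := congrArg Subtype.val (LinearMap.mem_ker.mp hvker)
      rw [h1, zero_smul]
end

section
/- Let y ∈ R^n and α > 0. If for every λ > 0 the vector α(e_1 − e_2) − λy is a permutation of α(e_1 − e_2) + λy, then y_1 = y_2 = 0. -/
open Matrix

theorem stmt13 {n : ℕ} (y : Fin (n + 2) → ℝ) (α : ℝ) (hα : 0 < α)
    (h : ∀ lam : ℝ, 0 < lam →
      PermOf (α • (Pi.single 0 1 - Pi.single 1 1) - lam • y)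
             (α • (Pi.single 0 1 - Pi.single 1 1) + lam • y)) :
    y 0 = 0 ∧ y 1 = 0 := by
  set M := Finset.univ.sup' Finset.univ_nonempty (fun i => |y i|) with hMdef
  have hM0 : 0 ≤ M :=
    le_trans (abs_nonneg (y 0)) (Finset.le_sup' (fun i => |y i|) (Finset.mem_univ (0 : Fin (n+2))))
  set lam := α / (2 * (M + 1)) with hlamdef
  have hlampos : 0 < lam := by positivity
  have hkey : ∀ i, lam * |y i| < α / 2 := by
    intro i
    have h1 : |y i| ≤ M := Finset.le_sup' (fun i => |y i|) (Finset.mem_univ i)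
    have h2 : lam * M < α / 2 := by
      rw [hlamdef, div_mul_eq_mul_div, div_lt_div_iff₀ (by positivity) (by norm_num)]
      nlinarith
    nlinarith [hlampos.le]
  -- pointwise bounds
  have hb : ∀ i, -(α/2) < lam * y i ∧ lam * y i < α/2 := by
    intro i
    have := hkey i
    have habs : |lam * y i| < α/2 := by
      rw [abs_mul, abs_of_pos hlampos]; exact this
    exact abs_lt.mp habs
  obtain ⟨σ, hσ⟩ := h lam hlampos
  have hval : ∀ i, α * ((if i = 0 then (1:ℝ) else 0) - (if i = 1 then 1 else 0)) - lam * y i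
      = α * ((if σ i = 0 then (1:ℝ) else 0) - (if σ i = 1 then 1 else 0)) + lam * y (σ i) := by
    intro i
    have := hσ i
    simpa [Pi.single_apply, smul_eq_mul, sub_eq_iff_eq_add] using this
  have h01 : (0 : Fin (n+2)) ≠ 1 := by simp [Fin.ext_iff]
  -- σ 0 = 0
  have hσ0 : σ 0 = 0 := by
    by_contra hne
    have := hval 0
    simp [h01, hne] at this
    by_cases h1 : σ 0 = 1
    · simp [h1] at this
      have := hb 0
      have := hb 1
      nlinarith
    · simp [h1] at this
      have := hb 0
      have := hb (σ 0)
      nlinarith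
  -- σ 1 = 1
  have hσ1 : σ 1 = 1 := by
    by_contra hne
    have := hval 1
    simp [h01.symm, hne] at this
    by_cases h0 : σ 1 = 0
    · simp [h0] at this
      have := hb 1
      have := hb 0
      nlinarith
    · simp [h0] at this
      have := hb 1
      have := hb (σ 1)
      nlinarith
  constructor
  · have := hval 0
    simp [h01, hσ0] at this
    nlinarith
  · have := hval 1
    simp [h01.symm, hσ1] at this
    nlinarith
end

section
/- Let X be an n×n matrix with n ≥ 5 satisfying condition (0). Then for any two columns X^{(i)}, X^{(j)}, the difference X^{(i)} − X^{(j)} has at most three nonzero coordinates. -/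
open Matrix

/-!
Condition (0) provides, for each zero-sum `a`, a row permutation depending on `a`; since a real
vector space is not a finite union of proper subspaces, one permutation `τ` serves all zero-sum `a`
at once. Applied to `a = e_m - 𝟙 / n`, this says that permuting the columns of the row-centered
matrix `R` by `σ` permutes its rows by `τ`. So the orbit of every row of `R` under column
permutations has at most `n` elements. Transposing two positions that carry different entries moves
a row to a new element of its orbit, and each element arises from at most two ordered pairs; hence
every row of `R` is constant off a single position. If one row is a genuine spike, its `n`
translates are `n` distinct rows, hence all the rows, with exactly one spike at each position. Then
`X k i - X k j = R k i - R k j` is nonzero only for the rows spiking at `i` and at `j`.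
-/

open Equiv Finset

section UniformPermutation

variable {K V W α : Type*} [Field K] [Infinite K] [AddCommGroup V] [Module K V]
  [AddCommGroup W] [Module K W] [Finite α]

theorem exists_perm_forall_eq_comp_of_forall_exists_perm (f g : V →ₗ[K] α → W)
    (h : ∀ v, ∃ τ : Perm α, f v = g v ∘ τ) : ∃ τ : Perm α, ∀ v, f v = g v ∘ τ := by
  have hcover : ⋃ τ : Perm α,
      (LinearMap.eqLocus f (LinearMap.funLeft K W τ ∘ₗ g) : Set V) = Set.univ :=
    Set.eq_univ_of_forall fun v => Set.mem_iUnion.2 (h v)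
  obtain ⟨τ, hτ⟩ := Subspace.exists_eq_top_of_iUnion_eq_univ hcover
  exact ⟨τ, fun v => LinearMap.mem_eqLocus.1 (hτ ▸ Submodule.mem_top)⟩

end UniformPermutation

section PermutationOrbit

variable {α β : Type*} [DecidableEq α]

theorem comp_swap_ne_iff {w : α → β} {a b : α} (hab : w a ≠ w b) (x : α) :
    w (swap a b x) ≠ w x ↔ x = a ∨ x = b := by
  by_cases hxa : x = a
  · subst hxa; simpa using hab.symm
  by_cases hxb : x = b
  · subst hxb; simpa using hab
  simp [swap_apply_of_ne_of_ne hxa hxb, hxa, hxb]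

theorem eq_or_eq_swap_of_comp_swap_eq {w : α → β} {a b c d : α} (hab : w a ≠ w b)
    (hcd : w c ≠ w d) (h : w ∘ swap c d = w ∘ swap a b) :
    (c, d) = (a, b) ∨ (c, d) = (b, a) := by
  have hc : c = a ∨ c = b := (comp_swap_ne_iff hab c).1 <| by
    show (w ∘ swap a b) c ≠ w c; rw [← h]; exact (comp_swap_ne_iff hcd c).2 (Or.inl rfl)
  have hd : d = a ∨ d = b := (comp_swap_ne_iff hab d).1 <| by
    show (w ∘ swap a b) d ≠ w d; rw [← h]; exact (comp_swap_ne_iff hcd d).2 (Or.inr rfl)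
  have hcd' : c ≠ d := fun h => hcd (congrArg w h)
  grind

variable [Fintype α] [DecidableEq β]

theorem exists_forall_ne_eq_of_card_le {w : α → β} {S : Finset (α → β)}
    (hS : ∀ σ : Perm α, w ∘ σ ∈ S) (hcard : #S ≤ Fintype.card α) :
    ∃ p c, ∀ a ≠ p, w a = c := by
  by_contra! hw
  set P : Finset (α × α) := {x | w x.1 ≠ w x.2}
  have hlower : 2 * Fintype.card α ≤ #P := by
    have hrow : ∀ a, 2 ≤ #{b | w a ≠ w b} := by
      intro a
      obtain ⟨b₁, -, h₁⟩ := hw a (w a)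
      obtain ⟨b₂, h₂₁, h₂⟩ := hw b₁ (w a)
      exact one_lt_card.2 ⟨b₁, by simpa using Ne.symm h₁, b₂, by simpa using Ne.symm h₂, h₂₁.symm⟩
    calc 2 * Fintype.card α = ∑ _a : α, 2 := by simp [mul_comm]
      _ ≤ ∑ a, #{b | w a ≠ w b} := sum_le_sum fun a _ => hrow a
      _ = #P := by simp [P, card_filter, Fintype.sum_prod_type]
  have hupper : #P ≤ 2 * #(S.erase w) := by
    refine card_le_mul_card_image_of_maps_to (f := fun x => w ∘ swap x.1 x.2) ?_ 2 ?_
    · rintro ⟨a, b⟩ hab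
      refine mem_erase.2 ⟨fun h => ?_, hS _⟩
      exact (mem_filter.1 hab).2 (by simpa using (congrFun h a).symm)
    · intro v _
      rcases eq_empty_or_nonempty {x ∈ P | w ∘ swap x.1 x.2 = v} with h | ⟨⟨a, b⟩, hx⟩
      · simp [h]
      calc _ ≤ #{(a, b), (b, a)} := card_le_card fun ⟨c, d⟩ hy => by
            simp only [P, mem_filter, mem_univ, true_and] at hx hy
            simpa using eq_or_eq_swap_of_comp_swap_eq hx.1 hy.1 (hy.2.trans hx.2.symm)
        _ ≤ 2 := card_le_two
  have := card_erase_add_one (by simpa using hS 1)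
  omega

variable {ι : Type*} [Fintype ι] {r : ι → α → β}

theorem exists_surjective_forall_eq_ite_of_ne (hr : ∀ t (σ : Perm α), ∃ t', r t' = r t ∘ σ)
    (hcard : Fintype.card ι ≤ Fintype.card α) {k₀ : ι} {i j : α} (hk₀ : r k₀ i ≠ r k₀ j) :
    ∃ (t : α → ι) (c d : β), Function.Surjective t ∧
      ∀ q x, r (t q) x = if x = q then d else c := by
  obtain ⟨p, c, hc⟩ := exists_forall_ne_eq_of_card_le (w := r k₀) (S := univ.image r)
    (fun σ => by obtain ⟨t', ht'⟩ := hr k₀ σ; exact ht' ▸ mem_image_of_mem r (mem_univ t'))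
    (card_image_le.trans (by simpa using hcard))
  have hd : r k₀ p ≠ c := by
    intro hp
    have hconst : ∀ x, r k₀ x = c := fun x => if hx : x = p then hx ▸ hp else hc x hx
    exact hk₀ ((hconst i).trans (hconst j).symm)
  choose t ht using fun q => hr k₀ (swap p q)
  have hspike : ∀ q x, r (t q) x = if x = q then r k₀ p else c := by
    intro q x
    rw [ht q, Function.comp_apply]
    split_ifs with hx
    · rw [hx, swap_apply_right]
    · exact hc _ fun h => hx (by simpa using swap_apply_eq_iff.1 h)
  have ht_inj : Function.Injective t := by
    intro q q' h
    have := hspike q' q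
    rw [← h, hspike q q, if_pos rfl] at this
    by_contra hqq
    exact hd (this.trans (if_neg hqq))
  refine ⟨t, c, r k₀ p, ?_, hspike⟩
  exact ((Fintype.bijective_iff_injective_and_card t).2
    ⟨ht_inj, le_antisymm (Fintype.card_le_of_injective t ht_inj) hcard⟩).2

theorem card_filter_ne_le_two [DecidableEq ι] (hr : ∀ t (σ : Perm α), ∃ t', r t' = r t ∘ σ)
    (hcard : Fintype.card ι ≤ Fintype.card α) (i j : α) : #{k | r k i ≠ r k j} ≤ 2 := by
  rcases eq_empty_or_nonempty {k | r k i ≠ r k j} with h | ⟨k₀, hk₀⟩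
  · simp [h]
  obtain ⟨t, c, d, ht_surj, hspike⟩ :=
    exists_surjective_forall_eq_ite_of_ne hr hcard (mem_filter.1 hk₀).2
  calc _ ≤ #{t i, t j} := card_le_card fun k hk => by
        obtain ⟨q, rfl⟩ := ht_surj k
        have hq : r (t q) i ≠ r (t q) j := (mem_filter.1 hk).2
        rw [hspike, hspike] at hq
        by_cases hqi : i = q
        · simp [← hqi]
        by_cases hqj : j = q
        · simp [← hqj]
        · simp [hqi, hqj] at hq
    _ ≤ 2 := card_le_two

end PermutationOrbit

section RowCentered

variable {ι : Type*} {n : ℕ}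

noncomputable def rowCentered (X : Matrix ι (Fin n) ℝ) : Matrix ι (Fin n) ℝ :=
  fun t m => X t m - (∑ l, X t l) / n

theorem mulVec_single_sub_const_eq_rowCentered (X : Matrix ι (Fin n) ℝ) (m : Fin n) :
    X *ᵥ (Pi.single m 1 - fun _ => (n : ℝ)⁻¹) = fun t => rowCentered X t m := by
  ext t
  simp [rowCentered, mulVec, dotProduct, mul_sub, sum_sub_distrib, div_eq_mul_inv, sum_mul,
    Pi.single_apply]

end RowCentered

namespace Cond0

variable {n : ℕ} {X : Matrix (Fin n) (Fin n) ℝ}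

theorem exists_perm_forall_mulVec_eq_comp (hX : Cond0 X) (σ : Perm (Fin n)) :
    ∃ τ : Perm (Fin n), ∀ a, ∑ i, a i = 0 → X *ᵥ a = (X *ᵥ (a ∘ σ)) ∘ τ := by
  let H := LinearMap.ker (∑ i, LinearMap.proj i : (Fin n → ℝ) →ₗ[ℝ] ℝ)
  have hH : ∀ a, a ∈ H ↔ ∑ i, a i = 0 := by simp [H, LinearMap.sum_apply]
  obtain ⟨τ, hτ⟩ := exists_perm_forall_eq_comp_of_forall_exists_perm
    (X.mulVecLin ∘ₗ H.subtype) (X.mulVecLin ∘ₗ LinearMap.funLeft ℝ ℝ σ ∘ₗ H.subtype)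
    fun a => by
      obtain ⟨τ, hτ⟩ := hX a ((hH a).1 a.2) _ ⟨σ, rfl⟩
      exact ⟨τ, funext fun t => by simpa [permMatrix_mulVec, LinearMap.funLeft] using hτ t⟩
  exact ⟨τ, fun a ha => by simpa [LinearMap.funLeft] using hτ ⟨a, (hH a).2 ha⟩⟩

theorem exists_rowCentered_eq_comp (hX : Cond0 X) (t : Fin n) (σ : Perm (Fin n)) :
    ∃ t', rowCentered X t' = rowCentered X t ∘ σ := by
  obtain ⟨τ, hτ⟩ := hX.exists_perm_forall_mulVec_eq_comp σ
  refine ⟨τ t, funext fun m => ?_⟩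
  have hn : (n : ℝ) ≠ 0 := Nat.cast_ne_zero.2 (Fin.pos m).ne'
  set a : Fin n → ℝ := Pi.single (σ m) 1 - fun _ => (n : ℝ)⁻¹
  have hsum : ∑ i, a i = 0 := by simp [a, hn]
  have hcomp : a ∘ σ = Pi.single m 1 - fun _ => (n : ℝ)⁻¹ := by
    ext l; simp [a, Pi.single_apply]
  have := congrFun (hτ a hsum) t
  rwa [hcomp, mulVec_single_sub_const_eq_rowCentered, mulVec_single_sub_const_eq_rowCentered,
    eq_comm] at this

end Cond0

theorem stmt14_general {n : ℕ} (X : Matrix (Fin n) (Fin n) ℝ)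
    (hX : Cond0 X) (i j : Fin n) :
    (Finset.univ.filter fun k => X k i - X k j ≠ 0).card ≤ 3 := by
  have hdiff : ∀ k, X k i - X k j = rowCentered X k i - rowCentered X k j := fun k => by
    simp [rowCentered]
  calc _ = #{k | rowCentered X k i ≠ rowCentered X k j} := by simp_rw [hdiff, sub_ne_zero]
    _ ≤ 2 := card_filter_ne_le_two hX.exists_rowCentered_eq_comp le_rfl i j
    _ ≤ 3 := by norm_num

theorem stmt14 {n : ℕ} (hn : 5 ≤ n) (X : Matrix (Fin n) (Fin n) ℝ)
    (hX : Cond0 X) (i j : Fin n) :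
    (Finset.univ.filter fun k => X k i - X k j ≠ 0).card ≤ 3 :=
  stmt14_general X hX i j
end

section
/- Let X be an n×n matrix, n ≥ 3, satisfying condition (0). Then either all columns of X are equal (X = X^{(1)} e^t), or there exists α > 0 such that X^{(i)} − X^{(j)} is a permutation of α(e_1 − e_2) for all distinct i, j. -/
/-!
A real vector space is not a finite union of proper subspaces, so in condition (0) a single row
permutation serves all zero-sum `a` at once; on `a = e_i - e_j` this says that every row of `X`,
with its columns permuted by any `π`, is another row of `X` up to an additive constant.

Fix a nonconstant row `y`. The rows realising `y ∘ swap a b`, for the pairs `{a, b}` with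
`y a ≠ y b`, are pairwise distinct and differ from the row realising `y`. So the graph of these
pairs has fewer than `n` edges, hence a vertex of degree at most one: `y = c + β e_p`. The row
realising `y ∘ swap p x` is then `β e_x` up to a constant; these rows are distinct, so
`X^{(i)} - X^{(j)} = β (e_{g i} - e_{g j})` for a permutation `g`.
-/

open Matrix

open Finset Equiv

lemma Submodule.exists_le_of_forall_exists_mem {K M ι : Type*} [Field K] [Infinite K]
    [AddCommGroup M] [Module K M] [Finite ι] {p : Submodule K M} {q : ι → Submodule K M}
    (h : ∀ x ∈ p, ∃ i, x ∈ q i) : ∃ i, p ≤ q i := by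
  by_contra! hp
  obtain ⟨x, hx⟩ := Submodule.exists_forall_notMem_of_forall_ne_top
    (fun i => (q i).comap p.subtype) fun i => mt Submodule.comap_subtype_eq_top.mp (hp i)
  obtain ⟨i, hi⟩ := h x x.2
  exact hx i hi

lemma Cond0.exists_perm_mulVec_eq {n : ℕ} {X : Matrix (Fin n) (Fin n) ℝ} (hX : Cond0 X)
    (σ : Perm (Fin n)) :
    ∃ τ : Perm (Fin n), ∀ a, ∑ i, a i = 0 → X *ᵥ a = (X *ᵥ (a ∘ σ)) ∘ τ := by
  have hcover : ∀ a ∈ LinearMap.ker (∑ i, LinearMap.proj i : (Fin n → ℝ) →ₗ[ℝ] ℝ),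
      ∃ τ : Perm (Fin n), a ∈ LinearMap.eqLocus X.mulVecLin
        (τ.permMatrix ℝ * X * σ.permMatrix ℝ).mulVecLin := by
    intro a ha
    obtain ⟨τ, hτ⟩ := hX a (by simpa using ha) _ ⟨σ, rfl⟩
    refine ⟨τ, funext fun r => ?_⟩
    simpa [← mulVec_mulVec, permMatrix_mulVec] using hτ r
  obtain ⟨τ, hτ⟩ := Submodule.exists_le_of_forall_exists_mem hcover
  refine ⟨τ, fun a ha => ?_⟩
  simpa [← mulVec_mulVec, permMatrix_mulVec] using hτ (by simpa using ha)

lemma Cond0.exists_perm_sub_eq {n : ℕ} {X : Matrix (Fin n) (Fin n) ℝ} (hX : Cond0 X)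
    (π : Perm (Fin n)) :
    ∃ τ : Perm (Fin n), ∀ r i j, X r i - X r j = X (τ r) (π i) - X (τ r) (π j) := by
  obtain ⟨τ, hτ⟩ := hX.exists_perm_mulVec_eq π.symm
  refine ⟨τ, fun r i j => ?_⟩
  have := congrFun (hτ (Pi.single i 1 - Pi.single j 1) (by simp [sum_sub_distrib])) r
  simpa [Pi.sub_comp, Pi.single_comp_equiv, mulVec_sub, mulVec_single_one] using this

lemma comp_symm_eq_of_forall_sub_eq {ι K : Type*} [Fintype ι] [Field K] [CharZero K]
    {y z : ι → K} {s s' : Perm ι}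
    (h : ∀ i j, y i - y j = z (s i) - z (s j)) (h' : ∀ i j, y i - y j = z (s' i) - z (s' j)) :
    y ∘ s.symm = y ∘ s'.symm := by
  -- `y ∘ s.symm - y ∘ s'.symm` is constant, and its sum vanishes.
  funext u
  set D : ι → K := fun v => y (s.symm v) - y (s'.symm v)
  have hD : ∀ v, D v = D u := fun v => by
    have h₁ := h (s.symm u) (s.symm v)
    have h₂ := h' (s'.symm u) (s'.symm v)
    simp only [apply_symm_apply] at h₁ h₂
    linear_combination h₂ - h₁
  have hsum : (Fintype.card ι : K) * D u = 0 := by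
    calc (Fintype.card ι : K) * D u = ∑ v, D v := by simp [hD]
      _ = 0 := by simp [D, sum_sub_distrib, Equiv.sum_comp]
  have : Nonempty ι := ⟨u⟩
  have hcard : (Fintype.card ι : K) ≠ 0 := Nat.cast_ne_zero.mpr Fintype.card_ne_zero
  simpa [D, sub_eq_zero] using (mul_eq_zero.mp hsum).resolve_left hcard

section

variable {ι : Type*} [DecidableEq ι]

lemma mem_sym2_iff_apply_swap_ne {α : Type*} {y : ι → α} {a b : ι} (hab : y a ≠ y b)
    (u : ι) : u ∈ s(a, b) ↔ y (swap a b u) ≠ y u := by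
  rw [Sym2.mem_iff]
  by_cases ha : u = a
  · simp [ha, hab.symm]
  by_cases hb : u = b
  · simp [hb, hab]
  simp [ha, hb, swap_apply_of_ne_of_ne]

lemma sym2_eq_of_comp_swap_eq {α : Type*} {y : ι → α} {a b a' b' : ι} (hab : y a ≠ y b)
    (hab' : y a' ≠ y b') (h : y ∘ swap a b = y ∘ swap a' b') : s(a, b) = s(a', b') :=
  Sym2.ext fun u => by
    rw [mem_sym2_iff_apply_swap_ne hab, mem_sym2_iff_apply_swap_ne hab']
    exact Iff.of_eq (congrArg (· ≠ y u) (congrFun h u))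

lemma exists_eq_add_single {K : Type*} [AddCommGroup K] {y : ι → K} {x : ι}
    (hx : {u | y u ≠ y x}.Subsingleton) (hy : ∃ i j, y i ≠ y j) :
    ∃ p β, β ≠ 0 ∧ ∀ i, y i = y x + (Pi.single p β : ι → K) i := by
  obtain ⟨i, j, hij⟩ := hy
  obtain ⟨p, hp⟩ : ∃ p, y p ≠ y x := by
    by_cases hi : y i = y x
    · exact ⟨j, hi ▸ hij.symm⟩
    · exact ⟨i, hi⟩
  refine ⟨p, y p - y x, sub_ne_zero.mpr hp, fun u => ?_⟩
  by_cases hu : u = p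
  · simp [hu]
  · have : y u = y x := by_contra fun h => hu (hx h hp)
    simp [hu, this]

end

section

variable {ι K : Type*} [Fintype ι] [DecidableEq ι] [Field K] [CharZero K]

/-- The edges of `(⊤ : SimpleGraph K).comap y` are the pairs `{a, b}` with `y a ≠ y b`; the edge
`{a, b}` is sent to the row realising `y ∘ swap a b`. -/
lemma card_edgeFinset_comap_lt {y : ι → K} {Z : ι → ι → K}
    (hZ : ∀ π : Perm ι, ∃ r, ∀ i j, y i - y j = Z r (π i) - Z r (π j))
    [Fintype ((⊤ : SimpleGraph K).comap y).edgeSet] :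
    #((⊤ : SimpleGraph K).comap y).edgeFinset < Fintype.card ι := by
  choose R hR using hZ
  have hne_one : ∀ a b, y a ≠ y b → R (swap a b) ≠ R (Equiv.refl ι) := fun a b hab he => by
    have := comp_symm_eq_of_forall_sub_eq (hR (swap a b)) (he ▸ hR (Equiv.refl ι))
    exact hab (by simpa using congrFun this b)
  have hinj : ∀ a b a' b', y a ≠ y b → y a' ≠ y b' → R (swap a b) = R (swap a' b') →
      s(a, b) = s(a', b') := fun a b a' b' hab hab' he => by
    refine sym2_eq_of_comp_swap_eq hab hab' ?_
    have h := comp_symm_eq_of_forall_sub_eq (hR (swap a b)) (he ▸ hR (swap a' b'))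
    rwa [Equiv.symm_swap, Equiv.symm_swap] at h
  let f : Sym2 ι → ι :=
    Sym2.lift ⟨fun a b => R (swap a b), fun a b => congrArg R (Equiv.swap_comm a b)⟩
  calc #((⊤ : SimpleGraph K).comap y).edgeFinset ≤ #(univ.erase (R (Equiv.refl ι))) := by
        refine card_le_card_of_injOn f ?_ ?_
        · intro e he
          induction e using Sym2.ind with | _ a b => ?_
          simpa [f] using hne_one a b (by simpa using he)
        · intro e he e' he'
          induction e using Sym2.ind with | _ a b => ?_
          induction e' using Sym2.ind with | _ a' b' => ?_
          exact hinj a b a' b' (by simpa using he) (by simpa using he')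
    _ < Fintype.card ι := card_erase_lt_of_mem (mem_univ _)

lemma exists_subsingleton_ne_of_forall_perm {y : ι → K} {Z : ι → ι → K}
    (hZ : ∀ π : Perm ι, ∃ r, ∀ i j, y i - y j = Z r (π i) - Z r (π j)) :
    ∃ x, {u | y u ≠ y x}.Subsingleton := by
  classical
  set G := (⊤ : SimpleGraph K).comap y
  by_contra! h
  have hdeg : ∀ x, 2 ≤ G.degree x := fun x => by
    obtain ⟨u, hu, v, hv, huv⟩ := h x
    exact one_lt_card.mpr
      ⟨u, by simpa [G, eq_comm] using hu, v, by simpa [G, eq_comm] using hv, huv⟩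
  have hE : #G.edgeFinset < Fintype.card ι := card_edgeFinset_comap_lt hZ
  have hsum := G.sum_degrees_eq_twice_card_edges
  have hsum_le : ∑ _x : ι, 2 ≤ ∑ x, G.degree x := sum_le_sum fun x _ => hdeg x
  simp only [sum_const, card_univ, smul_eq_mul] at hsum_le
  omega

lemma exists_perm_sub_eq_smul_single_sub_single {y : ι → K} {Z : ι → ι → K}
    (hZ : ∀ π : Perm ι, ∃ r, ∀ i j, y i - y j = Z r (π i) - Z r (π j)) {p : ι} {c β : K}
    (hβ : β ≠ 0) (hy : ∀ i, y i = c + (Pi.single p β : ι → K) i) :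
    ∃ g : Perm ι, ∀ i j,
      (fun r => Z r i - Z r j) = β • (Pi.single (g i) 1 - Pi.single (g j) 1 : ι → K) := by
  choose R hR using hZ
  set f : ι → ι := fun x => R (swap p x)
  have hsingle : ∀ x w,
      (Pi.single p β : ι → K) (swap p x w) = (Pi.single x β : ι → K) w := fun x w => by
    simp [Pi.single_apply, swap_apply_eq_iff]
  have hrow : ∀ x u v, Z (f x) u - Z (f x) v =
      (Pi.single x β : ι → K) u - (Pi.single x β : ι → K) v := fun x u v => by
    have h := hR (swap p x) (swap p x u) (swap p x v)
    rw [swap_apply_self, swap_apply_self, hy, hy, hsingle, hsingle] at h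
    rw [← h]
    ring
  have hf : Function.Injective f := fun x x' hxx' => by
    by_contra hne
    have h₁ := hrow x x x'
    have h₂ := hrow x' x x'
    rw [hxx'] at h₁
    simp [hne, Ne.symm hne] at h₁ h₂
    exact hβ (by linear_combination (h₁.symm.trans h₂) / 2)
  let g := Equiv.ofBijective f (Finite.injective_iff_bijective.mp hf)
  refine ⟨g, fun i j => funext fun r => ?_⟩
  obtain ⟨x, rfl⟩ := g.surjective r
  simp [g, hrow, Pi.single_apply, hf.eq_iff, eq_comm, mul_sub]

end

lemma Equiv.Perm.exists_apply_eq_and_apply_eq {α : Type*} [DecidableEq α] {a b a' b' : α}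
    (hab : a ≠ b) (hab' : a' ≠ b') : ∃ σ : Perm α, σ a = a' ∧ σ b = b' := by
  have hb : swap a a' b ≠ a' := fun h =>
    hab ((swap a a').injective (h.trans (swap_apply_left a a').symm)).symm
  refine ⟨(swap a a').trans (swap (swap a a' b) b'), ?_, ?_⟩
  · simp [swap_apply_of_ne_of_ne hb.symm hab']
  · simp

lemma permOf_smul_single_sub_single {n : ℕ} {a b a' b' : Fin n} (hab : a ≠ b) (hab' : a' ≠ b')
    (c : ℝ) :
    PermOf (c • (Pi.single a 1 - Pi.single b 1)) (c • (Pi.single a' 1 - Pi.single b' 1)) := by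
  obtain ⟨σ, rfl, rfl⟩ := Perm.exists_apply_eq_and_apply_eq hab hab'
  exact ⟨σ, fun i => by simp [Pi.single_apply, σ.injective.eq_iff]⟩

theorem stmt15 {n : ℕ} (hn : 3 ≤ n) (X : Matrix (Fin n) (Fin n) ℝ)
    (hX : Cond0 X) :
    (∀ k l l', X k l = X k l') ∨
    ∃ α : ℝ, 0 < α ∧ ∀ i j : Fin n, i ≠ j →
      PermOf (fun k => X k i - X k j)
        (α • (Pi.single (⟨0, by omega⟩ : Fin n) 1 - Pi.single ⟨1, by omega⟩ 1)) := by
  refine or_iff_not_imp_left.mpr fun hconst => ?_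
  push Not at hconst
  obtain ⟨k, hk⟩ := hconst
  have hrows (π : Perm (Fin n)) : ∃ r, ∀ i j, X k i - X k j = X r (π i) - X r (π j) :=
    let ⟨τ, hτ⟩ := hX.exists_perm_sub_eq π
    ⟨τ k, hτ k⟩
  obtain ⟨x, hx⟩ := exists_subsingleton_ne_of_forall_perm hrows
  obtain ⟨p, β, hβ, hp⟩ := exists_eq_add_single hx hk
  obtain ⟨g, hg⟩ := exists_perm_sub_eq_smul_single_sub_single hrows hβ hp
  refine ⟨|β|, abs_pos.mpr hβ, fun i j hij => ?_⟩
  have h01 : (⟨0, by omega⟩ : Fin n) ≠ ⟨1, by omega⟩ := by simp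
  have hgij : g i ≠ g j := g.injective.ne hij
  rw [hg]
  rcases abs_choice β with hβabs | hβabs
  · rw [hβabs]
    exact permOf_smul_single_sub_single hgij h01 β
  · rw [hβabs, ← neg_sub, smul_neg, ← neg_smul]
    exact permOf_smul_single_sub_single hgij.symm h01 (-β)
end

section
/- An n×n real matrix X satisfies condition (α) — there exists α > 0 with X^{(i)} − X^{(j)} a permutation of α(e_1 − e_2) for all distinct i, j — if and only if X = v e^t + λP for some v ∈ R^n, λ ≠ 0, and permutation matrix P. -/
open Matrix

/-!
Fix a column `i₀`. For `j ≠ i₀` write `X⁽ʲ⁾ - X⁽ⁱ⁰⁾ = α (e_{a j} - e_{b j})`. Since `X⁽ʲ⁾ - X⁽ᵏ⁾` has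
the same shape, comparing coordinates gives `a j = a k` or `b j = b k` for all `j, k`, and a pair
of maps with this property has a constant member. If `b ≡ q`, every column is
`(X⁽ⁱ⁰⁾ - α e_q) + α e_{τ j}` (symmetrically with `-α` when `a` is constant); distinct columns make
`τ` injective, hence a permutation. Conversely, the columns of `v eᵗ + λ P_σ` differ by
`λ (e_{σ⁻¹ i} - e_{σ⁻¹ j})`, a permutation of `|λ| (e₁ - e₂)`.
-/

open Function

lemma forall_eq_or_forall_eq_of_forall_eq_or_eq {S T : Type*} {a b : S → T}
    (h : ∀ j k, a j = a k ∨ b j = b k) : (∀ j k, a j = a k) ∨ ∀ j k, b j = b k := by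
  refine or_iff_not_imp_left.mpr fun ha => ?_
  push Not at ha
  obtain ⟨i, j, hij⟩ := ha
  have hbij : b i = b j := (h i j).resolve_left hij
  have hb : ∀ k, b k = b i := fun k => by
    rcases h k i with hki | hki
    · exact ((h k j).resolve_left (by rwa [hki])).trans hbij.symm
    · exact hki
  exact fun k l => (hb k).trans (hb l).symm

section SingleSubSingle

variable {m : Type*} [DecidableEq m]

lemma single_sub_single_ne_zero {a b : m} (hab : a ≠ b) :
    (Pi.single a 1 - Pi.single b 1 : m → ℝ) ≠ 0 := fun h => by
  simpa [hab] using congrFun h a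

lemma exists_smul_single_sub_single_eq_abs_smul (c : ℝ) {a b : m} (hab : a ≠ b) :
    ∃ a' b', a' ≠ b' ∧
      c • (Pi.single a 1 - Pi.single b 1 : m → ℝ) = |c| • (Pi.single a' 1 - Pi.single b' 1) := by
  rcases abs_cases c with ⟨hc, -⟩ | ⟨hc, -⟩
  · exact ⟨a, b, hab, by rw [hc]⟩
  · exact ⟨b, a, hab.symm, by rw [hc, neg_smul, ← smul_neg, neg_sub]⟩

lemma eq_or_eq_of_single_sub_single_sub_eq {a b c d p q : m} (hab : a ≠ b) (hcd : c ≠ d)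
    (h : (Pi.single a 1 - Pi.single b 1 : m → ℝ) - (Pi.single c 1 - Pi.single d 1) =
      Pi.single p 1 - Pi.single q 1) :
    a = c ∨ b = d := by
  -- Otherwise the `c`-coordinate forces `q = c`, the `d`-coordinate `p = d`, and the
  -- `a`-coordinate then reads `1 = 0`.
  by_contra! hne
  obtain ⟨hac, hbd⟩ := hne
  have hcq : c = q := by
    have hc := congrFun h c
    simp only [Pi.sub_apply, Pi.single_apply, if_neg hac.symm, if_neg hcd] at hc
    by_contra hcq
    simp only [if_neg hcq] at hc
    split_ifs at hc <;> linarith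
  have hdp : d = p := by
    have hd := congrFun h d
    simp only [Pi.sub_apply, Pi.single_apply, if_neg hbd.symm, if_neg hcd.symm] at hd
    by_contra hdp
    simp only [if_neg hdp] at hd
    split_ifs at hd <;> linarith
  subst hcq hdp
  have ha := congrFun h a
  simp only [Pi.sub_apply, Pi.single_apply, if_neg hab, if_neg hac] at ha
  split_ifs at ha <;> linarith

lemma exists_forall_eq_add_smul_single_of_sub_eq {ι : Type*} {x : ι → m → ℝ} {i₀ : ι} {c : ℝ}
    {f : {j // j ≠ i₀} → m} {g : m}
    (h : ∀ j : {j // j ≠ i₀}, x j - x i₀ = c • (Pi.single (f j) 1 - Pi.single g 1)) :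
    ∃ (v : m → ℝ) (τ : ι → m), ∀ j, x j = v + c • Pi.single (τ j) 1 := by
  classical
  refine ⟨x i₀ - c • Pi.single g 1, fun j => if hj : j = i₀ then g else f ⟨j, hj⟩, fun j => ?_⟩
  dsimp only
  split_ifs with hj
  · rw [hj, sub_add_cancel]
  · linear_combination (norm := module) h ⟨j, hj⟩

theorem exists_forall_eq_add_smul_single {ι : Type*} [Nontrivial ι] {x : ι → m → ℝ} {α : ℝ}
    (hα : α ≠ 0)
    (h : ∀ i j, i ≠ j → ∃ a b, a ≠ b ∧ x i - x j = α • (Pi.single a 1 - Pi.single b 1)) :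
    ∃ (v : m → ℝ) (c : ℝ) (τ : ι → m), c ≠ 0 ∧ Injective τ ∧
      ∀ j, x j = v + c • Pi.single (τ j) 1 := by
  have hx_inj : Injective x := fun i j hij => by
    by_contra hne
    obtain ⟨a, b, hab, hx⟩ := h i j hne
    exact smul_ne_zero hα (single_sub_single_ne_zero hab) (hx.symm.trans (sub_eq_zero.mpr hij))
  suffices ∃ (v : m → ℝ) (c : ℝ) (τ : ι → m), c ≠ 0 ∧ ∀ j, x j = v + c • Pi.single (τ j) 1 by
    obtain ⟨v, c, τ, hc, hτ⟩ := this
    exact ⟨v, c, τ, hc, fun i j hij => hx_inj (by rw [hτ i, hτ j, hij]), hτ⟩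
  obtain ⟨i₀, i₁, h₀₁⟩ := exists_pair_ne ι
  choose a b hab hx using fun j : {j // j ≠ i₀} => h j i₀ j.2
  have hpair : ∀ j k, a j = a k ∨ b j = b k := by
    intro j k
    by_cases hjk : j = k
    · exact Or.inl (congrArg a hjk)
    obtain ⟨p, q, -, hpq⟩ := h j k (Subtype.coe_injective.ne hjk)
    refine eq_or_eq_of_single_sub_single_sub_eq (p := p) (q := q) (hab j) (hab k)
      (smul_right_injective _ hα ?_)
    dsimp only
    rw [smul_sub, ← hx, ← hx, sub_sub_sub_cancel_right, hpq]
  let j₁ : {j // j ≠ i₀} := ⟨i₁, h₀₁.symm⟩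
  rcases forall_eq_or_forall_eq_of_forall_eq_or_eq hpair with ha | hb
  · obtain ⟨v, τ, hτ⟩ := exists_forall_eq_add_smul_single_of_sub_eq (c := -α) (g := a j₁)
      fun j => by rw [hx j, ha j j₁, neg_smul, ← smul_neg, neg_sub]
    exact ⟨v, -α, τ, neg_ne_zero.mpr hα, hτ⟩
  · obtain ⟨v, τ, hτ⟩ := exists_forall_eq_add_smul_single_of_sub_eq (g := b j₁)
      fun j => by rw [hx j, hb j j₁]
    exact ⟨v, α, τ, hα, hτ⟩

end SingleSubSingle

lemma permOf_smul_single_sub_single_iff {n : ℕ} {i j : Fin n} (hij : i ≠ j) (α : ℝ)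
    (u : Fin n → ℝ) :
    PermOf u (α • (Pi.single i 1 - Pi.single j 1)) ↔
      ∃ a b, a ≠ b ∧ u = α • (Pi.single a 1 - Pi.single b 1) := by
  have hcomp (σ : Equiv.Perm (Fin n)) : (α • (Pi.single i 1 - Pi.single j 1) : Fin n → ℝ) ∘ σ =
      α • (Pi.single (σ.symm i) 1 - Pi.single (σ.symm j) 1) := by
    rw [← Pi.single_comp_equiv, ← Pi.single_comp_equiv]
    rfl
  constructor
  · rintro ⟨σ, hσ⟩
    exact ⟨σ.symm i, σ.symm j, σ.symm.injective.ne hij, (funext hσ).trans (hcomp σ)⟩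
  · rintro ⟨a, b, hab, rfl⟩
    obtain ⟨σ, rfl, rfl⟩ :=
      MulAction.is_two_pretransitive_iff.mp (Equiv.Perm.isMultiplyPretransitive _ 2) hab hij
    refine ⟨σ, fun k => ?_⟩
    simpa using (congrFun (hcomp σ) k).symm

lemma transpose_of_add_smul_permMatrix_apply {m : Type*} [DecidableEq m] (v : m → ℝ) (c : ℝ)
    (σ : Equiv.Perm m) (j : m) :
    (of (fun i _ => v i) + c • σ.permMatrix ℝ)ᵀ j = v + c • Pi.single (σ.symm j) 1 := by
  ext k
  simp [Pi.single_apply, Equiv.eq_symm_apply]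

theorem stmt16 {n : ℕ} (hn : 2 ≤ n) (X : Matrix (Fin n) (Fin n) ℝ) :
    (∃ α : ℝ, 0 < α ∧ ∀ i j : Fin n, i ≠ j →
      PermOf (fun k => X k i - X k j)
        (α • (Pi.single (⟨0, by omega⟩ : Fin n) 1 - Pi.single ⟨1, by omega⟩ 1))) ↔
    ∃ (v : Fin n → ℝ) (lam : ℝ) (Q : Matrix (Fin n) (Fin n) ℝ),
      lam ≠ 0 ∧ IsPermMatrix Q ∧ X = (Matrix.of fun i _ => v i) + lam • Q := by
  have h01 : (⟨0, by omega⟩ : Fin n) ≠ ⟨1, by omega⟩ := by simp [Fin.ext_iff]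
  simp only [permOf_smul_single_sub_single_iff h01]
  constructor
  · rintro ⟨α, hα, h⟩
    have : Nontrivial (Fin n) := Fin.nontrivial_iff_two_le.mpr hn
    obtain ⟨v, c, τ, hc, hτ, hX⟩ := exists_forall_eq_add_smul_single (x := Xᵀ) hα.ne' h
    let σ : Equiv.Perm (Fin n) := (Equiv.ofBijective τ hτ.bijective_of_finite).symm
    refine ⟨v, c, σ.permMatrix ℝ, hc, ⟨σ, rfl⟩, transpose_injective (funext fun j => ?_)⟩
    rw [transpose_of_add_smul_permMatrix_apply, hX j]
    rfl
  · rintro ⟨v, c, Q, hc, ⟨σ, rfl⟩, rfl⟩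
    refine ⟨|c|, abs_pos.mpr hc, fun i j hij => ?_⟩
    obtain ⟨a, b, hab, habs⟩ :=
      exists_smul_single_sub_single_eq_abs_smul c (σ.symm.injective.ne hij)
    refine ⟨a, b, hab, Eq.trans ?_ habs⟩
    rw [smul_sub, ← add_sub_add_left_eq_sub _ _ v, ← transpose_of_add_smul_permMatrix_apply,
      ← transpose_of_add_smul_permMatrix_apply]
    rfl
end
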